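/- Let 0 < p, q < 1 with p + q < 1/2, and suppose a_{m,t} ≤ 1 − m^{-q} for all m and all 1 ≤ t ≤ m. Define the sum statistic s_m(ζ) = Σ_{t=1}^m ζ_t and the critical value c'_m = m/2 − m^{1−(p+q)}/4. Then the sum test, which rejects the null hypothesis if and only if s_m ≤ c'_m, has its sum of type I and type II errors tend to 0: P0_m(s_m ≤ c'_m) → 0 and P1_m(s_m > c'_m) → 0 as m → ∞. (Proposition 3.3, part 1.) -/

import Mathlib

/-!
Under both laws the coordinates are independent with values in `[0, 1]`, so `s_m` has variance
at most `m / 4`, and Chebyshev bounds each error by `m / (4 r²)`, where `r` is the distance from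
`c'_m` to the mean of `s_m`. Under `P0_m` the mean is `m / 2`; under `P1_m` each coordinate mean
drops by at least `ε_m m^{-q} / 2`, so the mean is at most `m / 2 - m^{1-(p+q)} / 2`. Either way
`r ≥ m^{1-(p+q)} / 4`, and `m / (4 r²) ≤ 4 m^{2(p+q)-1} → 0` because `p + q < 1/2`.
-/

open MeasureTheory Filter

/-- The uniform distribution on `[0, a]` (for `a > 0`). -/
noncomputable def unif (a : ℝ) : Measure ℝ :=
  (ENNReal.ofReal a)⁻¹ • volume.restrict (Set.Icc 0 a)

/-- The mixture `(1 - ε)·U[0,1] + ε·U[0,a]`. -/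
noncomputable def mix (ε a : ℝ) : Measure ℝ :=
  ENNReal.ofReal (1 - ε) • unif 1 + ENNReal.ofReal ε • unif a

/-- The null law `P0_m`: `m` i.i.d. uniform-`[0,1]` coordinates. -/
noncomputable def nullLaw (m : ℕ) : Measure (Fin m → ℝ) :=
  Measure.pi fun _ => unif 1

/-- The alternative law `P1_m`: independent coordinates, the `t`-th distributed as
`(1 - ε)·U[0,1] + ε·U[0, a t]`. -/
noncomputable def altLaw (m : ℕ) (ε : ℝ) (a : Fin m → ℝ) : Measure (Fin m → ℝ) :=
  Measure.pi fun t => mix ε (a t)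

open ProbabilityTheory

section Chebyshev

variable {ι : Type*} [Fintype ι] (μ : ι → Measure ℝ) [∀ i, IsProbabilityMeasure (μ i)]
  {a b : ℝ}

lemma memLp_eval_pi (h : ∀ i, ∀ᵐ x ∂μ i, x ∈ Set.Icc a b) (i : ι) :
    MemLp (fun ζ : ι → ℝ => ζ i) 2 (Measure.pi μ) :=
  (memLp_of_bounded (h i) aestronglyMeasurable_id 2).comp_measurePreserving
    (measurePreserving_eval μ i)

lemma integral_eval_pi (i : ι) : ∫ ζ, ζ i ∂Measure.pi μ = ∫ x, x ∂μ i := by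
  rw [← (measurePreserving_eval μ i).map_eq]
  exact (integral_map (μ := Measure.pi μ) (f := fun x => x) (measurable_pi_apply i).aemeasurable
    aestronglyMeasurable_id).symm

lemma measureReal_abs_sum_sub_ge_le (h : ∀ i, ∀ᵐ x ∂μ i, x ∈ Set.Icc a b) {r : ℝ} (hr : 0 < r) :
    (Measure.pi μ).real {ζ | r ≤ |∑ i, ζ i - ∑ i, ∫ x, x ∂μ i|}
      ≤ Fintype.card ι * (b - a) ^ 2 / (4 * r ^ 2) := by
  have hmemLp : MemLp (∑ i, fun ζ : ι → ℝ => ζ i) 2 (Measure.pi μ) :=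
    memLp_finsetSum' _ fun i _ => memLp_eval_pi μ h i
  have hmean : (Measure.pi μ)[∑ i, fun ζ : ι → ℝ => ζ i] = ∑ i, ∫ x, x ∂μ i := by
    simp only [Finset.sum_apply]
    rw [integral_finsetSum _ fun i _ => (memLp_eval_pi μ h i).integrable one_le_two]
    exact Finset.sum_congr rfl fun i _ => integral_eval_pi μ i
  have hvar : Var[∑ i, fun ζ : ι → ℝ => ζ i; Measure.pi μ]
      ≤ Fintype.card ι * (b - a) ^ 2 / 4 := by
    rw [variance_sum_pi (X := fun _ x => x)
      fun i => memLp_of_bounded (h i) aestronglyMeasurable_id 2]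
    refine (Finset.sum_le_sum fun i _ =>
      variance_le_sq_of_bounded (h i) (X := fun x => x) aemeasurable_id).trans_eq ?_
    simp [div_pow]
    ring
  have hcheb := meas_ge_le_variance_div_sq hmemLp hr
  rw [hmean] at hcheb
  simp only [Finset.sum_apply] at hcheb
  exact ENNReal.toReal_le_of_le_ofReal (by positivity) (hcheb.trans
    (ENNReal.ofReal_le_ofReal ((div_le_div_of_nonneg_right hvar (sq_nonneg r)).trans_eq (by ring))))

lemma measureReal_sum_le_le (h : ∀ i, ∀ᵐ x ∂μ i, x ∈ Set.Icc a b) {c r : ℝ} (hr : 0 < r)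
    (hc : c + r ≤ ∑ i, ∫ x, x ∂μ i) :
    (Measure.pi μ).real {ζ | ∑ i, ζ i ≤ c} ≤ Fintype.card ι * (b - a) ^ 2 / (4 * r ^ 2) := by
  refine (measureReal_mono ?_).trans (measureReal_abs_sum_sub_ge_le μ h hr)
  intro ζ (hζ : ∑ i, ζ i ≤ c)
  rw [Set.mem_ofPred_eq, abs_sub_comm]
  exact le_abs.mpr (Or.inl (by linarith))

lemma measureReal_lt_sum_le (h : ∀ i, ∀ᵐ x ∂μ i, x ∈ Set.Icc a b) {c r : ℝ} (hr : 0 < r)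
    (hc : ∑ i, ∫ x, x ∂μ i + r ≤ c) :
    (Measure.pi μ).real {ζ | c < ∑ i, ζ i} ≤ Fintype.card ι * (b - a) ^ 2 / (4 * r ^ 2) := by
  refine (measureReal_mono ?_).trans (measureReal_abs_sum_sub_ge_le μ h hr)
  intro ζ (hζ : c < ∑ i, ζ i)
  rw [Set.mem_ofPred_eq]
  exact le_abs.mpr (Or.inl (by linarith))

end Chebyshev

lemma isProbabilityMeasure_unif {a : ℝ} (ha : 0 < a) : IsProbabilityMeasure (unif a) := by
  constructor
  rw [unif, Measure.smul_apply, Measure.restrict_apply MeasurableSet.univ, Set.univ_inter,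
    Real.volume_Icc, smul_eq_mul, sub_zero]
  exact ENNReal.inv_mul_cancel (by simp [ha]) ENNReal.ofReal_ne_top

lemma unif_ae_mem_Icc (a : ℝ) : ∀ᵐ x ∂unif a, x ∈ Set.Icc 0 a :=
  Measure.ae_smul_measure (ae_restrict_mem measurableSet_Icc) _

lemma integrable_id_unif {a : ℝ} (ha : 0 < a) : Integrable (fun x : ℝ => x) (unif a) :=
  have := isProbabilityMeasure_unif ha
  (memLp_of_bounded (unif_ae_mem_Icc a) aestronglyMeasurable_id 1).integrable le_rfl

lemma integral_id_unif {a : ℝ} (ha : 0 < a) : ∫ x, x ∂unif a = a / 2 := by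
  rw [unif, integral_smul_measure, integral_Icc_eq_integral_Ioc,
    ← intervalIntegral.integral_of_le ha.le, integral_id, ENNReal.toReal_inv,
    ENNReal.toReal_ofReal ha.le, smul_eq_mul]
  field_simp
  ring

lemma isProbabilityMeasure_mix {ε a : ℝ} (hε₀ : 0 ≤ ε) (hε₁ : ε ≤ 1) (ha : 0 < a) :
    IsProbabilityMeasure (mix ε a) := by
  have := isProbabilityMeasure_unif one_pos
  have := isProbabilityMeasure_unif ha
  constructor
  simp only [mix, Measure.add_apply, Measure.smul_apply, measure_univ, smul_eq_mul, mul_one]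
  rw [← ENNReal.ofReal_add (by linarith) hε₀, sub_add_cancel, ENNReal.ofReal_one]

lemma mix_ae_mem_Icc (ε : ℝ) {a : ℝ} (ha : a ≤ 1) : ∀ᵐ x ∂mix ε a, x ∈ Set.Icc 0 1 := by
  rw [mix, ae_add_measure_iff]
  refine ⟨Measure.ae_smul_measure (unif_ae_mem_Icc 1) _, Measure.ae_smul_measure ?_ _⟩
  filter_upwards [unif_ae_mem_Icc a] with x hx
  exact ⟨hx.1, hx.2.trans ha⟩

lemma integral_id_mix {ε a : ℝ} (hε₀ : 0 ≤ ε) (hε₁ : ε ≤ 1) (ha : 0 < a) :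
    ∫ x, x ∂mix ε a = (1 - ε) / 2 + ε * a / 2 := by
  rw [mix, integral_add_measure ((integrable_id_unif one_pos).smul_measure ENNReal.ofReal_ne_top)
      ((integrable_id_unif ha).smul_measure ENNReal.ofReal_ne_top),
    integral_smul_measure, integral_smul_measure, integral_id_unif one_pos, integral_id_unif ha,
    ENNReal.toReal_ofReal (by linarith), ENNReal.toReal_ofReal hε₀, smul_eq_mul, smul_eq_mul]
  ring

lemma nullLaw_real_sum_le_le (m : ℕ) {r : ℝ} (hr : 0 < r) :
    (nullLaw m).real {ζ | ∑ t, ζ t ≤ m / 2 - r} ≤ m / (4 * r ^ 2) := by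
  have := isProbabilityMeasure_unif one_pos
  have hmean : m / 2 - r + r ≤ ∑ _t : Fin m, ∫ x, x ∂unif 1 := by
    simp [integral_id_unif one_pos, div_eq_mul_inv]
  simpa [nullLaw] using measureReal_sum_le_le _ (fun _ => unif_ae_mem_Icc 1) hr hmean

lemma altLaw_real_lt_sum_le (m : ℕ) {ε δ c r : ℝ} (hε₀ : 0 ≤ ε) (hε₁ : ε ≤ 1) (hδ : 0 ≤ δ)
    {a : Fin m → ℝ} (ha₀ : ∀ t, 0 < a t) (ha₁ : ∀ t, a t ≤ 1 - δ) (hr : 0 < r)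
    (hc : m * (1 - ε * δ) / 2 + r ≤ c) :
    (altLaw m ε a).real {ζ | c < ∑ t, ζ t} ≤ m / (4 * r ^ 2) := by
  have := fun t => isProbabilityMeasure_mix hε₀ hε₁ (ha₀ t)
  have hmean : ∑ t, ∫ x, x ∂mix ε (a t) + r ≤ c := by
    refine le_trans (add_le_add_left ?_ r) hc
    calc ∑ t, ∫ x, x ∂mix ε (a t) ≤ ∑ _t : Fin m, (1 - ε * δ) / 2 :=
          Finset.sum_le_sum fun t _ => by
            rw [integral_id_mix hε₀ hε₁ (ha₀ t)]
            nlinarith [ha₁ t]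
      _ = m * (1 - ε * δ) / 2 := by simp [mul_div_assoc]
  simpa [altLaw] using measureReal_lt_sum_le _
    (fun t => mix_ae_mem_Icc ε ((ha₁ t).trans (by linarith))) hr hmean

lemma tendsto_natCast_div_sq_rpow {s : ℝ} (hs : s < 1 / 2) :
    Tendsto (fun m : ℕ => (m : ℝ) / (4 * ((m : ℝ) ^ (1 - s) / 4) ^ 2)) atTop (nhds 0) := by
  have h := ((tendsto_rpow_neg_atTop (by linarith : (0 : ℝ) < 1 - 2 * s)).comp
    tendsto_natCast_atTop_atTop).const_mul 4
  rw [mul_zero] at h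
  refine h.congr' ?_
  filter_upwards [eventually_gt_atTop 0] with m hm
  have hm₀ : (0 : ℝ) < m := Nat.cast_pos.mpr hm
  rw [Function.comp_apply, div_pow, ← Real.rpow_natCast, ← Real.rpow_mul hm₀.le,
    Real.rpow_neg hm₀.le, Real.rpow_sub hm₀, Real.rpow_one]
  push_cast
  field_simp
  rw [← Real.rpow_add hm₀, show 2 * s + 2 * (1 - s) = (2 : ℕ) by push_cast; ring, Real.rpow_natCast]

theorem sum_test_consistent_general (p q : ℝ) (hp0 : 0 < p)
    (hpq : p + q < 1 / 2)
    (a : (m : ℕ) → Fin m → ℝ)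
    (ha0 : ∀ m, 2 ≤ m → ∀ t, 0 < a m t)
    (ha1 : ∀ m : ℕ, 2 ≤ m → ∀ t, a m t ≤ 1 - (m : ℝ) ^ (-q)) :
    Tendsto
      (fun m : ℕ => (nullLaw m
        {ζ | ∑ t, ζ t ≤ (m : ℝ) / 2 - (m : ℝ) ^ (1 - (p + q)) / 4}).toReal)
      atTop (nhds 0)
    ∧ Tendsto
      (fun m : ℕ => (altLaw m ((m : ℝ) ^ (-p)) (a m)
        {ζ | (m : ℝ) / 2 - (m : ℝ) ^ (1 - (p + q)) / 4 < ∑ t, ζ t}).toReal)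
      atTop (nhds 0) := by
  have hrate := tendsto_natCast_div_sq_rpow hpq
  have hgap : ∀ m : ℕ, 0 < m → 0 < (m : ℝ) ^ (1 - (p + q)) / 4 := fun m hm => by positivity
  refine ⟨squeeze_zero' (.of_forall fun _ => ENNReal.toReal_nonneg) ?_ hrate,
    squeeze_zero' (.of_forall fun _ => ENNReal.toReal_nonneg) ?_ hrate⟩
  · filter_upwards [eventually_gt_atTop 0] with m hm
    exact nullLaw_real_sum_le_le m (hgap m hm)
  · filter_upwards [eventually_ge_atTop 2] with m hm
    have hm₀ : (0 : ℝ) < m := by positivity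
    have hεδ : (m : ℝ) * ((m : ℝ) ^ (-p) * (m : ℝ) ^ (-q)) = (m : ℝ) ^ (1 - (p + q)) := by
      rw [← Real.rpow_add hm₀, ← Real.rpow_one_add' hm₀.le (by linarith)]
      ring_nf
    refine altLaw_real_lt_sum_le m (Real.rpow_nonneg hm₀.le _)
      (Real.rpow_le_one_of_one_le_of_nonpos (by exact_mod_cast (by omega : 1 ≤ m)) (by linarith))
      (Real.rpow_nonneg hm₀.le _) (ha0 m hm) (ha1 m hm) (hgap m (by omega)) (le_of_eq ?_)
    linear_combination -hεδ / 2

/-- **Proposition 3.3, part 1 (consistency of the sum test).** Let `0 < p, q < 1` with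
`p + q < 1/2`, `ε_m = m^{-p}`, and `a m t ∈ (0,1]` with `a m t ≤ 1 - m^{-q}` for all
`m ≥ 2`, `1 ≤ t ≤ m`.  With `s_m(ζ) = ∑_t ζ_t` and critical value
`c'_m = m/2 - m^{1-(p+q)}/4`, the sum test rejecting iff `s_m ≤ c'_m` has its sum of type I
and type II errors tend to `0`: `P0_m(s_m ≤ c'_m) → 0` and `P1_m(s_m > c'_m) → 0`. -/
theorem sum_test_consistent (p q : ℝ) (hp0 : 0 < p) (hp1 : p < 1)
    (hq0 : 0 < q) (hq1 : q < 1) (hpq : p + q < 1 / 2)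
    (a : (m : ℕ) → Fin m → ℝ)
    (ha0 : ∀ m, 2 ≤ m → ∀ t, 0 < a m t)
    (ha1 : ∀ m : ℕ, 2 ≤ m → ∀ t, a m t ≤ 1 - (m : ℝ) ^ (-q)) :
    Tendsto
      (fun m : ℕ => (nullLaw m
        {ζ | ∑ t, ζ t ≤ (m : ℝ) / 2 - (m : ℝ) ^ (1 - (p + q)) / 4}).toReal)
      atTop (nhds 0)
    ∧ Tendsto
      (fun m : ℕ => (altLaw m ((m : ℝ) ^ (-p)) (a m)
        {ζ | (m : ℝ) / 2 - (m : ℝ) ^ (1 - (p + q)) / 4 < ∑ t, ζ t}).toReal)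
      atTop (nhds 0) :=
  sum_test_consistent_general p q hp0 hpq a ha0 ha1
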